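/- arXiv:1003.3220 — 5 statements merged into one kernel-verified Lean document; each statement's English description precedes it below -/
import Mathlib

section
/- Let φ assign to each a ∈ GL(n,ℝ) a real array φ(a)^i_{jk} symmetric in j,k, and suppose φ satisfies the cocycle identity φ(ab)^i_{jk} = Σ_s a^i_s φ(b)^s_{jk} + Σ_{s,t} φ(a)^i_{st} b^s_j b^t_k for all a,b ∈ GL(n,ℝ). Then for every real λ with λ ≠ 0 and λ ≠ 1, and every b ∈ GL(n,ℝ), φ(b)^i_{jk} = (1/(λ² − λ)) · ( Σ_{s,t} φ(λI)^i_{st} b^s_j b^t_k − Σ_s b^i_s φ(λI)^s_{jk} ). In particular φ(b) is a quadratic polynomial in the entries of b. -/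
open Matrix BigOperators

noncomputable section

/-- n×n real matrices (first component of a 2-jet). -/
abbrev Mat (n : ℕ) := Matrix (Fin n) (Fin n) ℝ

/-- Real arrays a^i_{jk} (second component of a 2-jet). -/
abbrev Arr (n : ℕ) := Fin n → Fin n → Fin n → ℝ

/-- An element of the model of G₂(n): a pair (a₁, a₂). -/
abbrev Jet (n : ℕ) := Mat n × Arr n

/-- Symmetry of an array in its two lower indices. -/
def SymArr {n : ℕ} (c : Arr n) : Prop := ∀ i j k, c i j k = c i k j

/-- Membership in G₂(n): invertible first component, symmetric second component. -/
def IsJet {n : ℕ} (a : Jet n) : Prop := IsUnit a.1 ∧ SymArr a.2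

/-- The multiplication of G₂(n):
`(a·b)₁ = a₁ b₁`, `(a·b)₂^i_{jk} = Σ_s a₁^i_s b₂^s_{jk} + Σ_{s,t} a₂^i_{st} b₁^s_j b₁^t_k`. -/
def jmul {n : ℕ} (a b : Jet n) : Jet n :=
  (a.1 * b.1,
   fun i j k => (∑ s, a.1 i s * b.2 s j k) + ∑ s, ∑ t, a.2 i s t * b.1 s j * b.1 t k)

/-- The identity candidate (I, 0). -/
def jone (n : ℕ) : Jet n := ((1 : Mat n), fun _ _ _ => 0)


/-!
Scalar matrices are central, so the cocycle identity can be evaluated on both `(λI) b` and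
`b (λI)`, which are the same matrix. Left multiplication by `λI` scales `φ(b)` by `λ`, right
multiplication scales it by `λ²`; comparing the two expansions leaves `(λ² - λ) φ(b)` equal to an
explicit quadratic expression in `b` and `φ(λI)`.
-/

section ScalarMatrix

variable {ι R : Type*} [Fintype ι] [DecidableEq ι] [CommRing R]

theorem isUnit_smul_one {c : R} (hc : IsUnit c) : IsUnit (c • (1 : Matrix ι ι R)) := by
  simpa [Algebra.algebraMap_eq_smul_one] using hc.map (algebraMap R (Matrix ι ι R))

theorem sum_smul_one_apply_mul (c : R) (v : ι → R) (i : ι) :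
    ∑ s, (c • (1 : Matrix ι ι R)) i s * v s = c * v i := by
  simp [Matrix.smul_apply, Matrix.one_apply, ite_mul]

theorem sum_sum_mul_smul_one_apply_mul_smul_one_apply (c : R) (w : ι → ι → R) (j k : ι) :
    ∑ s, ∑ t, w s t * (c • (1 : Matrix ι ι R)) s j * (c • (1 : Matrix ι ι R)) t k
      = c ^ 2 * w j k := by
  simp only [Matrix.smul_apply, Matrix.one_apply, smul_eq_mul, mul_ite, mul_one, mul_zero, ite_mul,
    zero_mul, Finset.sum_ite_eq', Finset.mem_univ, ↓reduceIte]
  ring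

theorem cocycle_sq_sub_smul_eq {φ : Matrix ι ι R → ι → ι → ι → R}
    (hcoc : ∀ a b : Matrix ι ι R, IsUnit a → IsUnit b → ∀ i j k,
      φ (a * b) i j k =
        (∑ s, a i s * φ b s j k) + ∑ s, ∑ t, φ a i s t * b s j * b t k)
    {c : R} (hc : IsUnit c) {b : Matrix ι ι R} (hb : IsUnit b) (i j k : ι) :
    (c ^ 2 - c) * φ b i j k =
      (∑ s, ∑ t, φ (c • 1) i s t * b s j * b t k) - ∑ s, b i s * φ (c • 1) s j k := by
  have hc1 : IsUnit (c • (1 : Matrix ι ι R)) := isUnit_smul_one hc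
  have left_expansion := hcoc _ _ hc1 hb i j k
  have right_expansion := hcoc _ _ hb hc1 i j k
  rw [smul_one_mul, sum_smul_one_apply_mul] at left_expansion
  rw [mul_smul_one, sum_sum_mul_smul_one_apply_mul_smul_one_apply] at right_expansion
  linear_combination left_expansion - right_expansion

end ScalarMatrix

theorem g2_cocycle_formula_general (n : ℕ) (φ : Mat n → Arr n)
    (hcoc : ∀ a b : Mat n, IsUnit a → IsUnit b → ∀ i j k,
      φ (a * b) i j k =
        (∑ s, a i s * φ b s j k) + ∑ s, ∑ t, φ a i s t * b s j * b t k) :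
    ∀ lam : ℝ, lam ≠ 0 → lam ≠ 1 → ∀ b : Mat n, IsUnit b → ∀ i j k,
      φ b i j k =
        (1 / (lam ^ 2 - lam)) *
          ((∑ s, ∑ t, φ (lam • (1 : Mat n)) i s t * b s j * b t k) -
            ∑ s, b i s * φ (lam • (1 : Mat n)) s j k) := by
  intro lam hl0 hl1 b hb i j k
  have hne : lam ^ 2 - lam ≠ 0 := by
    rw [sq, ← mul_sub_one]
    exact mul_ne_zero hl0 (sub_ne_zero.mpr hl1)
  rw [one_div, eq_inv_mul_iff_mul_eq₀ hne]
  exact cocycle_sq_sub_smul_eq hcoc (isUnit_iff_ne_zero.mpr hl0) hb i j k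

/-- a cocycle φ on GL(n,ℝ) is given by the explicit quadratic formula
in terms of φ(λI), for every λ ≠ 0, 1. -/
theorem g2_cocycle_formula (n : ℕ) (hn : 1 ≤ n) (φ : Mat n → Arr n)
    (hsym : ∀ a : Mat n, IsUnit a → SymArr (φ a))
    (hcoc : ∀ a b : Mat n, IsUnit a → IsUnit b → ∀ i j k,
      φ (a * b) i j k =
        (∑ s, a i s * φ b s j k) + ∑ s, ∑ t, φ a i s t * b s j * b t k) :
    ∀ lam : ℝ, lam ≠ 0 → lam ≠ 1 → ∀ b : Mat n, IsUnit b → ∀ i j k,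
      φ b i j k =
        (1 / (lam ^ 2 - lam)) *
          ((∑ s, ∑ t, φ (lam • (1 : Mat n)) i s t * b s j * b t k) -
            ∑ s, b i s * φ (lam • (1 : Mat n)) s j k) :=
  g2_cocycle_formula_general n φ hcoc
end
end

section
/- Let φ assign to each a ∈ GL(n,ℝ) a real array φ(a)^i_{jk} symmetric in j,k, satisfying φ(ab)^i_{jk} = Σ_s a^i_s φ(b)^s_{jk} + Σ_{s,t} φ(a)^i_{st} b^s_j b^t_k for all a,b ∈ GL(n,ℝ). Then the array k(λ) := φ(λI)/(λ² − λ) is independent of λ: for all λ, μ ∈ ℝ \ {0,1}, φ(λI)/(λ² − λ) = φ(μI)/(μ² − μ). -/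
open Matrix BigOperators

noncomputable section

lemma IsUnit.smul_one {R A : Type*} [CommSemiring R] [Semiring A] [Algebra R A] {c : R}
    (hc : IsUnit c) : IsUnit (c • (1 : A)) := by
  simpa only [Algebra.algebraMap_eq_smul_one] using hc.map (algebraMap R A)

/-- `a ↦ (a, φ a)` is multiplicative for `jmul` on `GL(n, ℝ)`. -/
def IsJetCocycle {n : ℕ} (φ : Mat n → Arr n) : Prop :=
  ∀ a b : Mat n, IsUnit a → IsUnit b → ∀ i j k,
    φ (a * b) i j k = (∑ s, a i s * φ b s j k) + ∑ s, ∑ t, φ a i s t * b s j * b t k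

namespace IsJetCocycle

variable {n : ℕ} {φ : Mat n → Arr n}

lemma apply_smul_one_mul (hφ : IsJetCocycle φ) {lam mu : ℝ} (hlam : lam ≠ 0) (hmu : mu ≠ 0)
    (i j k : Fin n) :
    φ ((lam * mu) • (1 : Mat n)) i j k =
      lam * φ (mu • (1 : Mat n)) i j k + mu ^ 2 * φ (lam • (1 : Mat n)) i j k := by
  have h := hφ _ _ hlam.isUnit.smul_one hmu.isUnit.smul_one i j k
  rw [smul_mul_smul_comm, one_mul] at h
  simp only [h, Matrix.smul_apply, Matrix.one_apply, smul_eq_mul, mul_ite, mul_one, mul_zero,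
    ite_mul, zero_mul, Finset.sum_ite_eq, Finset.sum_ite_eq', Finset.mem_univ, if_true]
  ring

/-- Comparing the two factorisations `(λμ) I = (λ I)(μ I) = (μ I)(λ I)`. -/
lemma sub_mul_apply_smul_one_comm (hφ : IsJetCocycle φ) {lam mu : ℝ} (hlam : lam ≠ 0)
    (hmu : mu ≠ 0) (i j k : Fin n) :
    φ (lam • (1 : Mat n)) i j k * (mu ^ 2 - mu) =
      φ (mu • (1 : Mat n)) i j k * (lam ^ 2 - lam) := by
  have h := (hφ.apply_smul_one_mul hlam hmu i j k).symm.trans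
    (mul_comm lam mu ▸ hφ.apply_smul_one_mul hmu hlam i j k)
  linear_combination h

end IsJetCocycle

theorem g2_cocycle_scalar_indep_general (n : ℕ) (φ : Mat n → Arr n)
    (hcoc : ∀ a b : Mat n, IsUnit a → IsUnit b → ∀ i j k,
      φ (a * b) i j k =
        (∑ s, a i s * φ b s j k) + ∑ s, ∑ t, φ a i s t * b s j * b t k) :
    ∀ lam mu : ℝ, lam ≠ 0 → lam ≠ 1 → mu ≠ 0 → mu ≠ 1 → ∀ i j k,
      φ (lam • (1 : Mat n)) i j k / (lam ^ 2 - lam) =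
        φ (mu • (1 : Mat n)) i j k / (mu ^ 2 - mu) := by
  intro lam mu hlam0 hlam1 hmu0 hmu1 i j k
  have sq_sub_ne_zero : ∀ {x : ℝ}, x ≠ 0 → x ≠ 1 → x ^ 2 - x ≠ 0 := fun hx0 hx1 => by
    rw [sq, ← mul_sub_one]
    exact mul_ne_zero hx0 (sub_ne_zero.mpr hx1)
  rw [div_eq_div_iff (sq_sub_ne_zero hlam0 hlam1) (sq_sub_ne_zero hmu0 hmu1)]
  exact IsJetCocycle.sub_mul_apply_smul_one_comm hcoc hlam0 hmu0 i j k

/-- for a cocycle φ on GL(n,ℝ), the array φ(λI)/(λ²−λ) is independent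
of λ ∈ ℝ \ {0,1}. -/
theorem g2_cocycle_scalar_indep (n : ℕ) (hn : 1 ≤ n) (φ : Mat n → Arr n)
    (hsym : ∀ a : Mat n, IsUnit a → SymArr (φ a))
    (hcoc : ∀ a b : Mat n, IsUnit a → IsUnit b → ∀ i j k,
      φ (a * b) i j k =
        (∑ s, a i s * φ b s j k) + ∑ s, ∑ t, φ a i s t * b s j * b t k) :
    ∀ lam mu : ℝ, lam ≠ 0 → lam ≠ 1 → mu ≠ 0 → mu ≠ 1 → ∀ i j k,
      φ (lam • (1 : Mat n)) i j k / (lam ^ 2 - lam) =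
        φ (mu • (1 : Mat n)) i j k / (mu ^ 2 - mu) :=
  g2_cocycle_scalar_indep_general n φ hcoc
end
end

section
/- Every splitting of π over GL(n,ℝ) is conjugate to ε by a kernel element: if σ : GL(n,ℝ) → G₂(n) is a group homomorphism with π∘σ = id, then there exists a real array k with k^i_{jk} = k^i_{kj} such that σ(b) = (I,k)·(b,0)·(I,−k) for all b ∈ GL(n,ℝ). -/
open Matrix BigOperators

noncomputable section

/-!
The dilation `c = 2 I` is central in `GL(n, ℝ)`, so `σ c = (2 I, T)` commutes with every
`σ b = (b, B)`. Comparing second components of `σ c · σ b = σ b · σ c` gives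
`2 B + T(b, b) = b T + 4 B`, i.e. `B = k(b, b) - b k` with `k = T / 2`, and this is exactly the
second component of `(I, k) · (b, 0) · (I, -k)`. The symmetry of `k` is that of `T`.
-/

section

variable {n : ℕ}

namespace Arr

def lmul (a : Mat n) (T : Arr n) : Arr n := fun i j k => ∑ s, a i s * T s j k

def pullback (T : Arr n) (b : Mat n) : Arr n :=
  fun i j k => ∑ s, ∑ t, T i s t * b s j * b t k

@[simp]
lemma lmul_smul_one (r : ℝ) (T : Arr n) : lmul (r • 1) T = r • T := by
  ext i j k
  simp [lmul, Matrix.one_apply]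

@[simp]
lemma lmul_zero (a : Mat n) : lmul a 0 = 0 := by
  ext i j k
  simp [lmul]

@[simp]
lemma lmul_smul (a : Mat n) (r : ℝ) (T : Arr n) : lmul a (r • T) = r • lmul a T := by
  ext i j k
  simp only [lmul, Pi.smul_apply, smul_eq_mul, Finset.mul_sum]
  exact Finset.sum_congr rfl fun s _ => by ring

@[simp]
lemma lmul_neg (a : Mat n) (T : Arr n) : lmul a (-T) = -lmul a T := by
  simpa using lmul_smul a (-1) T

@[simp]
lemma pullback_smul_one (T : Arr n) (r : ℝ) : pullback T (r • 1) = r ^ 2 • T := by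
  ext i j k
  simp [pullback, Matrix.one_apply]
  ring

@[simp]
lemma pullback_one (T : Arr n) : pullback T 1 = T := by
  simpa using pullback_smul_one T 1

@[simp]
lemma pullback_smul (r : ℝ) (T : Arr n) (b : Mat n) :
    pullback (r • T) b = r • pullback T b := by
  ext i j k
  simp only [pullback, Pi.smul_apply, smul_eq_mul, Finset.mul_sum]
  exact Finset.sum_congr rfl fun s _ => Finset.sum_congr rfl fun t _ => by ring

end Arr

lemma SymArr.smul {T : Arr n} (hT : SymArr T) (r : ℝ) : SymArr (r • T) :=
  fun i j k => by simp only [Pi.smul_apply, hT i j k]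

lemma jmul_eq (a b : Jet n) :
    jmul a b = (a.1 * b.1, Arr.lmul a.1 b.2 + Arr.pullback a.2 b.1) :=
  rfl

lemma jmul_conj_kernel (k : Arr n) (b : Mat n) :
    jmul (jmul (1, k) (b, 0)) (1, -k) = (b, Arr.pullback k b - Arr.lmul b k) := by
  simp only [jmul_eq, one_mul, mul_one, Arr.lmul_zero, zero_add, Arr.lmul_neg,
    Arr.pullback_one, neg_add_eq_sub]

lemma snd_eq_of_jmul_comm_two_smul_one (T B : Arr n) (b : Mat n)
    (h : jmul ((2 : ℝ) • 1, T) (b, B) = jmul (b, B) ((2 : ℝ) • 1, T)) :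
    B = Arr.pullback ((2⁻¹ : ℝ) • T) b - Arr.lmul b ((2⁻¹ : ℝ) • T) := by
  have h2 := congrArg Prod.snd h
  simp only [jmul_eq, Arr.lmul_smul_one, Arr.pullback_smul_one, Arr.pullback_smul,
    Arr.lmul_smul] at h2 ⊢
  linear_combination (norm := module) (-2⁻¹ : ℝ) • h2

end

theorem g2_splitting_conjugate_general (n : ℕ) (σ : Mat n → Jet n)
    (hσjet : ∀ a : Mat n, IsUnit a → IsJet (σ a))
    (hσsec : ∀ a : Mat n, IsUnit a → (σ a).1 = a)
    (hσhom : ∀ a b : Mat n, IsUnit a → IsUnit b → σ (a * b) = jmul (σ a) (σ b)) :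
    ∃ k : Arr n, SymArr k ∧ ∀ b : Mat n, IsUnit b →
      σ b = jmul (jmul (((1 : Mat n), k) : Jet n) ((b, fun _ _ _ => 0) : Jet n))
              (((1 : Mat n), fun i j l => -(k i j l)) : Jet n) := by
  set c : Mat n := (2 : ℝ) • 1
  have hc : IsUnit c := by
    simpa [Algebra.algebraMap_eq_smul_one] using
      (IsUnit.mk0 (2 : ℝ) two_ne_zero).map (algebraMap ℝ (Mat n))
  refine ⟨(2⁻¹ : ℝ) • (σ c).2, (hσjet c hc).2.smul _, fun b hb => ?_⟩
  have hσc : σ c = (c, (σ c).2) := Prod.ext (hσsec c hc) rfl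
  have hσb : σ b = (b, (σ b).2) := Prod.ext (hσsec b hb) rfl
  have hcomm : jmul (σ c) (σ b) = jmul (σ b) (σ c) := by
    rw [← hσhom c b hc hb, ← hσhom b c hb hc, ((Commute.one_left b).smul_left (2 : ℝ)).eq]
  rw [hσc, hσb] at hcomm
  rw [hσb, snd_eq_of_jmul_comm_two_smul_one _ _ _ hcomm]
  exact (jmul_conj_kernel _ b).symm

/-- every splitting σ of π over GL(n,ℝ) is conjugate to ε = (·,0) by a
kernel element (I,k): σ(b) = (I,k)·(b,0)·(I,−k). -/
theorem g2_splitting_conjugate (n : ℕ) (hn : 1 ≤ n) (σ : Mat n → Jet n)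
    (hσjet : ∀ a : Mat n, IsUnit a → IsJet (σ a))
    (hσsec : ∀ a : Mat n, IsUnit a → (σ a).1 = a)
    (hσhom : ∀ a b : Mat n, IsUnit a → IsUnit b → σ (a * b) = jmul (σ a) (σ b)) :
    ∃ k : Arr n, SymArr k ∧ ∀ b : Mat n, IsUnit b →
      σ b = jmul (jmul (((1 : Mat n), k) : Jet n) ((b, fun _ _ _ => 0) : Jet n))
              (((1 : Mat n), fun i j l => -(k i j l)) : Jet n) :=
  g2_splitting_conjugate_general n σ hσjet hσsec hσhom
end
end

section
/- Let L be a subgroup of GL(n,ℝ) containing a scalar matrix λI with λ ≠ 0 and λ ≠ 1 (for example L = O(n), which contains −I). Then every group homomorphism σ : L → G₂(n) with π∘σ = id_L is conjugate to the standard splitting by a kernel element: there exists a real array k with k^i_{jk} = k^i_{kj} such that σ(b) = (I,k)·(b,0)·(I,−k) for all b ∈ L. -/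
open Matrix BigOperators

noncomputable section

/-!
The scalar matrix `λI` commutes with every `b ∈ L`, so `σ b` commutes with `σ (λI) = (λI, c)`.
Comparing second components of `σ (λI) · σ b = σ b · σ (λI)` gives
`(λ² - λ) (σ b)₂ = c(b, b) - b c`, and the right side divided by `λ² - λ` is the second component
of `(I, k) · (b, 0) · (I, -k)` with `k = c / (λ² - λ)`.
-/

section

variable {n : ℕ}

theorem kernel_conj_eq (k : Arr n) (b : Mat n) :
    jmul (jmul (((1 : Mat n), k) : Jet n) ((b, fun _ _ _ => 0) : Jet n))
        (((1 : Mat n), fun i j l => -(k i j l)) : Jet n) =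
      (b, fun i j l => ∑ s, ∑ t, k i s t * b s j * b t l - ∑ s, b i s * k s j l) := by
  ext i j
  · simp [jmul]
  · simp [jmul, Matrix.one_apply, sub_eq_neg_add]

theorem snd_jmul_smul_one_left (lam : ℝ) (c : Arr n) (x : Jet n) (i j l : Fin n) :
    (jmul (lam • (1 : Mat n), c) x).2 i j l =
      lam * x.2 i j l + ∑ s, ∑ t, c i s t * x.1 s j * x.1 t l := by
  simp [jmul, Matrix.one_apply]

theorem snd_jmul_smul_one_right (lam : ℝ) (c : Arr n) (x : Jet n) (i j l : Fin n) :
    (jmul x (lam • (1 : Mat n), c)).2 i j l =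
      ∑ s, x.1 i s * c s j l + lam ^ 2 * x.2 i j l := by
  simp [jmul, Matrix.one_apply]
  ring

theorem eq_kernel_conj_of_commute_smul_one {lam : ℝ} (hlam0 : lam ≠ 0) (hlam1 : lam ≠ 1)
    {c : Arr n} {x : Jet n} (h : jmul (lam • (1 : Mat n), c) x = jmul x (lam • (1 : Mat n), c)) :
    x = jmul (jmul (((1 : Mat n), (lam ^ 2 - lam)⁻¹ • c) : Jet n) ((x.1, fun _ _ _ => 0) : Jet n))
        (((1 : Mat n), fun i j l => -(((lam ^ 2 - lam)⁻¹ • c) i j l)) : Jet n) := by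
  have hden : lam ^ 2 - lam ≠ 0 := by
    rw [show lam ^ 2 - lam = lam * (lam - 1) by ring]
    exact mul_ne_zero hlam0 (sub_ne_zero.mpr hlam1)
  rw [kernel_conj_eq]
  refine Prod.ext rfl (funext fun i => funext fun j => funext fun l => ?_)
  have hijl := congrFun (congrFun (congrFun (congrArg Prod.snd h) i) j) l
  rw [snd_jmul_smul_one_left, snd_jmul_smul_one_right] at hijl
  simp only [Pi.smul_apply, smul_eq_mul, mul_assoc, ← Finset.mul_sum,
    mul_left_comm _ (lam ^ 2 - lam)⁻¹]
  field_simp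
  linear_combination -hijl

end

theorem g2_subgroup_splitting_conjugate_general (n : ℕ)
    (L : Set (Mat n))
    (lam : ℝ) (hlam0 : lam ≠ 0) (hlam1 : lam ≠ 1) (hlamL : lam • (1 : Mat n) ∈ L)
    (σ : Mat n → Jet n)
    (hσjet : ∀ a ∈ L, IsJet (σ a))
    (hσsec : ∀ a ∈ L, (σ a).1 = a)
    (hσhom : ∀ a ∈ L, ∀ b ∈ L, σ (a * b) = jmul (σ a) (σ b)) :
    ∃ k : Arr n, SymArr k ∧ ∀ b ∈ L,
      σ b = jmul (jmul (((1 : Mat n), k) : Jet n) ((b, fun _ _ _ => 0) : Jet n))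
              (((1 : Mat n), fun i j l => -(k i j l)) : Jet n) := by
  set c := (σ (lam • 1)).2
  have hσlam : σ (lam • 1) = (lam • 1, c) := Prod.ext (hσsec _ hlamL) rfl
  refine ⟨(lam ^ 2 - lam)⁻¹ • c, fun i j l => ?_, fun b hb => ?_⟩
  · exact congrArg ((lam ^ 2 - lam)⁻¹ * ·) ((hσjet _ hlamL).2 i j l)
  · have hcomm : jmul (lam • 1, c) (σ b) = jmul (σ b) (lam • 1, c) := by
      rw [← hσlam, ← hσhom _ hlamL b hb, ← hσhom b hb _ hlamL, smul_one_mul, mul_smul_one]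
    simpa only [hσsec b hb] using eq_kernel_conj_of_commute_smul_one hlam0 hlam1 hcomm

/-- if L ⊆ GL(n,ℝ) is a subgroup containing a scalar matrix λI with
λ ≠ 0,1, then every splitting σ : L → G₂(n) of π over L is conjugate to the standard
splitting b ↦ (b,0) by a kernel element (I,k). -/
theorem g2_subgroup_splitting_conjugate (n : ℕ) (hn : 1 ≤ n)
    (L : Set (Mat n))
    (hLunit : ∀ a ∈ L, IsUnit a)
    (hLone : (1 : Mat n) ∈ L)
    (hLmul : ∀ a ∈ L, ∀ b ∈ L, a * b ∈ L)
    (hLinv : ∀ a ∈ L, a⁻¹ ∈ L)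
    (lam : ℝ) (hlam0 : lam ≠ 0) (hlam1 : lam ≠ 1) (hlamL : lam • (1 : Mat n) ∈ L)
    (σ : Mat n → Jet n)
    (hσjet : ∀ a ∈ L, IsJet (σ a))
    (hσsec : ∀ a ∈ L, (σ a).1 = a)
    (hσhom : ∀ a ∈ L, ∀ b ∈ L, σ (a * b) = jmul (σ a) (σ b)) :
    ∃ k : Arr n, SymArr k ∧ ∀ b ∈ L,
      σ b = jmul (jmul (((1 : Mat n), k) : Jet n) ((b, fun _ _ _ => 0) : Jet n))
              (((1 : Mat n), fun i j l => -(k i j l)) : Jet n) :=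
  g2_subgroup_splitting_conjugate_general n L lam hlam0 hlam1 hlamL σ hσjet hσsec hσhom
end
end

section
/- (Schwarzian splitting) The map ε : G₂(1) → G₃(1) defined by ε(a₁,a₂) = (a₁, a₂, (3/2)·a₂²/a₁) is a group homomorphism satisfying π∘ε = id on G₂(1); i.e. for all (a₁,a₂),(b₁,b₂) with a₁ ≠ 0 ≠ b₁, ε((a₁,a₂)(b₁,b₂)) = ε(a₁,a₂)·ε(b₁,b₂) in G₃(1). -/
noncomputable section

/-- Elements of the model of G₃(1): triples (a₁,a₂,a₃) of reals (with a₁ ≠ 0 for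
group elements). -/
abbrev G3 := ℝ × ℝ × ℝ

/-- Multiplication of G₃(1), coming from the chain rule for third-order
derivatives. -/
def g3mul (a b : G3) : G3 :=
  (a.1 * b.1,
   a.1 * b.2.1 + a.2.1 * b.1 ^ 2,
   a.1 * b.2.2 + 3 * a.2.1 * b.1 * b.2.1 + a.2.2 * b.1 ^ 3)

/-- Elements of the model of G₂(1): pairs (a₁,a₂) of reals (with a₁ ≠ 0). -/
abbrev G2 := ℝ × ℝ

/-- Multiplication of G₂(1). -/
def g2mul (a b : G2) : G2 := (a.1 * b.1, a.1 * b.2 + a.2 * b.1 ^ 2)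

/-- The projection π : G₃(1) → G₂(1). -/
def g3proj (a : G3) : G2 := (a.1, a.2.1)

/-- The Schwarzian splitting ε : G₂(1) → G₃(1). -/
def g3eps (a : G2) : G3 := (a.1, a.2, (3 / 2) * a.2 ^ 2 / a.1)

/- Expanding the square on the left, the cross term `2 · (3/2) · a₁ a₂ b₁² b₂` is exactly the
middle term `3 a₂ b₁ b₂` of the group law of G₃(1); this is what forces the constant `3/2`. -/
theorem schwarzian_term_mul {a₁ a₂ b₁ b₂ : ℝ} (ha : a₁ ≠ 0) (hb : b₁ ≠ 0) :
    3 / 2 * (a₁ * b₂ + a₂ * b₁ ^ 2) ^ 2 / (a₁ * b₁) =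
      a₁ * (3 / 2 * b₂ ^ 2 / b₁) + 3 * a₂ * b₁ * b₂ + 3 / 2 * a₂ ^ 2 / a₁ * b₁ ^ 3 := by
  field_simp
  ring

theorem g3eps_g2mul {a b : G2} (ha : a.1 ≠ 0) (hb : b.1 ≠ 0) :
    g3eps (g2mul a b) = g3mul (g3eps a) (g3eps b) := by
  simp only [g3eps, g2mul, g3mul, schwarzian_term_mul ha hb]

theorem g3proj_g3eps (a : G2) : g3proj (g3eps a) = a := rfl

/-- Schwarzian splitting: ε(a₁,a₂) = (a₁,a₂,(3/2)a₂²/a₁) is a group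
homomorphism G₂(1) → G₃(1) with π∘ε = id. -/
theorem g3_schwarzian_splitting :
    (∀ a b : G2, a.1 ≠ 0 → b.1 ≠ 0 →
      g3eps (g2mul a b) = g3mul (g3eps a) (g3eps b)) ∧
    (∀ a : G2, a.1 ≠ 0 → g3proj (g3eps a) = a) :=
  ⟨fun _ _ ha hb => g3eps_g2mul ha hb, fun a _ => g3proj_g3eps a⟩
end
end
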